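/- Let μ be any probability distribution on the nonidentity elements of a stabilizer group S of order 2^{n−k}, and set Ω_μ = Σ_{P∈S\{I}} μ(P)(P+I)/2. If Ω_μ acts as the identity on the code subspace (range of Π), then the largest eigenvalue of (I−Π)Ω_μ(I−Π) is at least (2^{n−k−1}−1)/(2^{n−k}−1), with equality when μ is uniform. -/

import Mathlib

open scoped Classical
open Matrix

lemma trace_eq_sum_eigs {d : ℕ} {A : Matrix (Fin d) (Fin d) ℂ} (hA : A.IsHermitian) :
    A.trace = ∑ i, (hA.eigenvalues i : ℂ) := by
  conv_lhs => rw [hA.spectral_theorem]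
  rw [Unitary.conjStarAlgAut_apply, Matrix.trace_mul_cycle]
  rw [Matrix.mem_unitaryGroup_iff'.mp (Matrix.IsHermitian.eigenvectorUnitary hA).2, one_mul,
    Matrix.trace_diagonal]
  rfl

lemma eig_quad {d : ℕ} {A : Matrix (Fin d) (Fin d) ℂ} (hA : A.IsHermitian) (c : ℝ)
    (h : A * A = (c : ℂ) • A) (i : Fin d) :
    hA.eigenvalues i = 0 ∨ hA.eigenvalues i = c := by
  set lam := hA.eigenvalues i with hlam
  set v : Fin d → ℂ := fun j => hA.eigenvectorBasis i j with hvdef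
  have hv : A *ᵥ v = lam • v := hA.mulVec_eigenvectorBasis i
  have hvne : v ≠ 0 := by
    have h0 := hA.eigenvectorBasis.orthonormal.ne_zero i
    intro hcon
    apply h0
    ext j
    exact congrFun hcon j
  have h2 : (A * A) *ᵥ v = lam • lam • v := by
    rw [← Matrix.mulVec_mulVec, hv, Matrix.mulVec_smul, hv]
  rw [h, Matrix.smul_mulVec, hv] at h2
  obtain ⟨j, hj⟩ := Function.ne_iff.mp hvne
  have h3 := congrFun h2 j
  simp only [Pi.smul_apply, Complex.real_smul, smul_eq_mul] at h3
  have h4 : ((lam : ℂ) - c) * lam * v j = 0 := by linear_combination -h3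
  rcases mul_eq_zero.mp h4 with h5 | h5
  · rcases mul_eq_zero.mp h5 with h6 | h6
    · right
      have : (lam : ℂ) = c := by linear_combination h6
      exact_mod_cast this
    · left; exact_mod_cast h6
  · exact absurd h5 hj

/-- Let `μ` be any probability distribution on the nonidentity elements
of the stabilizer group `S` (order `2^(n-k)`) of an `[[n,k,d]]` code, and set
`Ω_μ = ∑_{P∈S\{1}} μ(P)(P+1)/2`.  If `Ω_μ` acts as the identity on the code subspace
(the range of `Π`), then `λ_max((1−Π)Ω_μ(1−Π)) ≥ (2^{n-k-1}−1)/(2^{n-k}−1)`, with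
equality when `μ` is uniform. -/
theorem stabilizer_group_uniform_sampling_optimal {n k : ℕ} (hkn : k < n)
    (S : Finset (Matrix (Fin (2 ^ n)) (Fin (2 ^ n)) ℂ))
    (hone : (1 : Matrix (Fin (2 ^ n)) (Fin (2 ^ n)) ℂ) ∈ S)
    (hmul : ∀ P ∈ S, ∀ Q ∈ S, P * Q ∈ S)
    (hcomm : ∀ P ∈ S, ∀ Q ∈ S, P * Q = Q * P)
    (hherm : ∀ P ∈ S, P.IsHermitian)
    (hinv : ∀ P ∈ S, P * P = 1)
    (hnegI : (-1 : Matrix (Fin (2 ^ n)) (Fin (2 ^ n)) ℂ) ∉ S)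
    (htr : ∀ P ∈ S, P ≠ 1 → P.trace = 0)
    (hcard : S.card = 2 ^ (n - k))
    (μ : Matrix (Fin (2 ^ n)) (Fin (2 ^ n)) ℂ → ℝ)
    (hμ0 : ∀ P, 0 ≤ μ P) (hμ1 : ∑ P ∈ S.erase 1, μ P = 1)
    (Pi Ω : Matrix (Fin (2 ^ n)) (Fin (2 ^ n)) ℂ)
    (hPi : Pi = ((2 : ℂ) ^ (n - k))⁻¹ • ∑ P ∈ S, P)
    (hΩ : Ω = ∑ P ∈ S.erase 1, (μ P : ℂ) • ((2 : ℂ)⁻¹ • (P + 1)))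
    (hid : Ω * Pi = Pi)
    (hherm' : ((1 - Pi) * Ω * (1 - Pi)).IsHermitian) :
    ((2 : ℝ) ^ (n - k - 1) - 1) / ((2 : ℝ) ^ (n - k) - 1) ≤ (⨆ i, hherm'.eigenvalues i)
      ∧ ((∀ P ∈ S.erase 1, μ P = 1 / ((2 : ℝ) ^ (n - k) - 1)) →
          (⨆ i, hherm'.eigenvalues i)
            = ((2 : ℝ) ^ (n - k - 1) - 1) / ((2 : ℝ) ^ (n - k) - 1)) := by
  have hm1 : 1 ≤ n - k := by omega
  have hkn' : k ≤ n := hkn.le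
  have hNne : ((2 : ℂ) ^ (n - k)) ≠ 0 := pow_ne_zero _ two_ne_zero
  -- the sum of all elements of S is stabilized by each element
  have hStabSum : ∀ P ∈ S, P * (∑ Q ∈ S, Q) = ∑ Q ∈ S, Q := by
    intro P hP
    rw [Finset.mul_sum]
    refine Finset.sum_nbij' (fun Q => P * Q) (fun R => P * R)
      (fun Q hQ => hmul P hP Q hQ) (fun R hR => hmul P hP R hR) ?_ ?_ (fun Q _ => rfl)
    · intro Q hQ; show P * (P * Q) = Q; rw [← mul_assoc, hinv P hP, one_mul]
    · intro R hR; show P * (P * R) = R; rw [← mul_assoc, hinv P hP, one_mul]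
  have hSigma : (∑ P ∈ S, P) = ((2 : ℂ) ^ (n - k)) • Pi := by
    rw [hPi, smul_smul, mul_inv_cancel₀ hNne, one_smul]
  -- Pi is idempotent
  have hPi2 : Pi * Pi = Pi := by
    rw [hPi, Matrix.smul_mul, Matrix.mul_smul, Finset.sum_mul,
      Finset.sum_congr rfl hStabSum, Finset.sum_const, hcard,
      ← Nat.cast_smul_eq_nsmul ℂ, smul_smul, smul_smul]
    congr 1
    push_cast
    field_simp
  -- Pi is Hermitian
  have hPiH : Pi.IsHermitian := by
    rw [hPi]
    unfold Matrix.IsHermitian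
    rw [Matrix.conjTranspose_smul, Matrix.conjTranspose_sum]
    congr 1
    · simp
    · exact Finset.sum_congr rfl fun P hP => hherm P hP
  -- Ω is Hermitian
  have hΩH : Ω.IsHermitian := by
    rw [hΩ]
    unfold Matrix.IsHermitian
    rw [Matrix.conjTranspose_sum]
    refine Finset.sum_congr rfl fun P hP => ?_
    rw [Matrix.conjTranspose_smul, Matrix.conjTranspose_smul, Matrix.conjTranspose_add,
      Matrix.conjTranspose_one, hherm P (Finset.mem_of_mem_erase hP)]
    simp
  have hPiΩ : Pi * Ω = Pi := by
    have h := congrArg Matrix.conjTranspose hid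
    rwa [Matrix.conjTranspose_mul, hΩH, hPiH] at h
  -- the sandwiched matrix equals Ω - Pi
  have hM : (1 - Pi) * Ω * (1 - Pi) = Ω - Pi := by
    rw [sub_mul, one_mul, hPiΩ, sub_mul, mul_sub, mul_sub, hid, mul_one, mul_one, hPi2]
    abel
  -- traces
  have htrone : (Matrix.trace (1 : Matrix (Fin (2 ^ n)) (Fin (2 ^ n)) ℂ)) = (2 : ℂ) ^ n := by
    rw [Matrix.trace_one]
    simp
  have hTrPi : Pi.trace = (2 : ℂ) ^ k := by
    rw [hPi, Matrix.trace_smul, Matrix.trace_sum,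
      Finset.sum_eq_single_of_mem 1 hone (fun P hP hne => htr P hP hne), htrone,
      smul_eq_mul]
    rw [show n = (n - k) + k by omega, pow_add]
    field_simp
    rw [Nat.add_sub_cancel]
  have hTrΩ : Ω.trace = (2 : ℂ) ^ n / 2 := by
    rw [hΩ, Matrix.trace_sum]
    have : ∀ P ∈ S.erase 1, Matrix.trace ((μ P : ℂ) • ((2 : ℂ)⁻¹ • (P + 1)))
        = (μ P : ℂ) * ((2 : ℂ) ^ n / 2) := by
      intro P hP
      obtain ⟨hPne, hPS⟩ := Finset.mem_erase.mp hP
      rw [Matrix.trace_smul, Matrix.trace_smul, Matrix.trace_add, htr P hPS hPne, htrone]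
      simp only [smul_eq_mul]
      ring
    rw [Finset.sum_congr rfl this, ← Finset.sum_mul]
    have hcast : (∑ P ∈ S.erase 1, (μ P : ℂ)) = 1 := by
      rw [← Complex.ofReal_sum, hμ1, Complex.ofReal_one]
    rw [hcast, one_mul]
  -- eigenvalue sum
  set lam := hherm'.eigenvalues with hlamdef
  have hsumlam : ∑ i, lam i = (2 : ℝ) ^ n / 2 - (2 : ℝ) ^ k := by
    have h := trace_eq_sum_eigs hherm'
    conv at h => lhs; rw [hM]
    rw [Matrix.trace_sub, hTrΩ, hTrPi] at h
    have h2 : ((∑ i, lam i : ℝ) : ℂ) = ∑ i, (lam i : ℂ) := by push_cast; rfl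
    rw [← h] at h2
    have h3 : ((∑ i, lam i : ℝ) : ℂ) = (((2 : ℝ) ^ n / 2 - (2 : ℝ) ^ k : ℝ) : ℂ) := by
      rw [h2]; push_cast; ring
    exact_mod_cast h3
  -- (1 - Pi) is a Hermitian projection
  have hEH : (1 - Pi).IsHermitian := Matrix.isHermitian_one.sub hPiH
  have hEidem : (1 - Pi) * (1 - Pi) = 1 - Pi := by
    rw [sub_mul, one_mul, mul_sub, mul_one, hPi2]
    abel
  have hEeig : ∀ i, hEH.eigenvalues i = 0 ∨ hEH.eigenvalues i = 1 := by
    intro i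
    exact eig_quad hEH 1 (by rw [hEidem]; simp) i
  have hTrE : (1 - Pi).trace = (2 : ℂ) ^ n - (2 : ℂ) ^ k := by
    rw [Matrix.trace_sub, hTrPi, htrone]
  have hEsumlam : ∑ i, hEH.eigenvalues i = (2 : ℝ) ^ n - (2 : ℝ) ^ k := by
    have h := trace_eq_sum_eigs hEH
    rw [hTrE] at h
    have h2 : ((∑ i, hEH.eigenvalues i : ℝ) : ℂ) = ∑ i, (hEH.eigenvalues i : ℂ) := by
      push_cast; rfl
    rw [← h] at h2
    have h3 : ((∑ i, hEH.eigenvalues i : ℝ) : ℂ) = (((2 : ℝ) ^ n - (2 : ℝ) ^ k : ℝ) : ℂ) := by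
      rw [h2]; push_cast; ring
    exact_mod_cast h3
  -- rank counting
  have hcardE : ((Finset.univ.filter fun i => hEH.eigenvalues i ≠ 0).card : ℝ)
      = (2 : ℝ) ^ n - (2 : ℝ) ^ k := by
    rw [← hEsumlam, ← Finset.sum_filter_ne_zero Finset.univ]
    rw [Finset.card_eq_sum_ones, Nat.cast_sum]
    refine Finset.sum_congr rfl fun i hi => ?_
    have := Finset.mem_filter.mp hi
    rcases hEeig i with h | h
    · exact absurd h this.2
    · rw [h]; norm_num
  have hrank : ((Finset.univ.filter fun i => lam i ≠ 0).card : ℝ)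
      ≤ (2 : ℝ) ^ n - (2 : ℝ) ^ k := by
    rw [← hcardE]
    have h1 : ((1 - Pi) * Ω * (1 - Pi)).rank ≤ (1 - Pi).rank :=
      Matrix.rank_mul_le_right _ _
    rw [hherm'.rank_eq_card_non_zero_eigs, hEH.rank_eq_card_non_zero_eigs,
      Fintype.card_subtype, Fintype.card_subtype] at h1
    exact_mod_cast h1
  -- the supremum
  have hnefin : Nonempty (Fin (2 ^ n)) := ⟨⟨0, Nat.two_pow_pos n⟩⟩
  have hbdd : BddAbove (Set.range lam) := Set.Finite.bddAbove (Set.finite_range _)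
  set L := ⨆ i, lam i with hLdef
  have hLub : ∀ i, lam i ≤ L := fun i => le_ciSup hbdd i
  have hzero : ∃ i, lam i = 0 := by
    by_contra hcon
    push_neg at hcon
    have : (Finset.univ.filter fun i => lam i ≠ 0) = Finset.univ := by
      ext i; simp [hcon i]
    rw [this] at hrank
    simp only [Finset.card_univ, Fintype.card_fin] at hrank
    have h2k : (1 : ℝ) ≤ (2 : ℝ) ^ k := one_le_pow₀ (by norm_num)
    have h2n : ((2 ^ n : ℕ) : ℝ) = (2 : ℝ) ^ n := by push_cast; ring
    rw [h2n] at hrank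
    linarith
  have hL0 : 0 ≤ L := by
    obtain ⟨i, hi⟩ := hzero
    rw [← hi]; exact hLub i
  have hkey : (2 : ℝ) ^ n / 2 - (2 : ℝ) ^ k ≤ ((2 : ℝ) ^ n - (2 : ℝ) ^ k) * L := by
    rw [← hsumlam, ← Finset.sum_filter_ne_zero Finset.univ]
    calc ∑ i ∈ Finset.univ.filter fun i => lam i ≠ 0, lam i
        ≤ ∑ _i ∈ Finset.univ.filter fun i => lam i ≠ 0, L :=
          Finset.sum_le_sum fun i _ => hLub i
      _ = ((Finset.univ.filter fun i => lam i ≠ 0).card : ℝ) * L := by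
          rw [Finset.sum_const, nsmul_eq_mul]
      _ ≤ ((2 : ℝ) ^ n - (2 : ℝ) ^ k) * L := mul_le_mul_of_nonneg_right hrank hL0
  -- arithmetic to conclude part 1
  set b : ℝ := (2 : ℝ) ^ (n - k) with hbdef
  have hb2 : (2 : ℝ) ≤ b := by
    calc (2 : ℝ) = 2 ^ 1 := (pow_one 2).symm
    _ ≤ 2 ^ (n - k) := pow_le_pow_right₀ (by norm_num) hm1
  have ha0 : (0 : ℝ) < (2 : ℝ) ^ k := by positivity
  have hab : (2 : ℝ) ^ n = (2 : ℝ) ^ k * b := by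
    rw [hbdef, ← pow_add]; congr 1; omega
  have hbhalf : (2 : ℝ) ^ (n - k - 1) = b / 2 := by
    have : b = (2 : ℝ) ^ (n - k - 1) * 2 := by
      rw [hbdef, ← pow_succ]; congr 1; omega
    rw [this]; ring
  have part1 : ((2 : ℝ) ^ (n - k - 1) - 1) / ((2 : ℝ) ^ (n - k) - 1) ≤ L := by
    rw [hbhalf]
    rw [div_le_iff₀ (by linarith : (0 : ℝ) < b - 1)]
    have hkey' : (2 : ℝ) ^ k * (b / 2 - 1) ≤ (2 : ℝ) ^ k * ((b - 1) * L) := by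
      calc (2 : ℝ) ^ k * (b / 2 - 1) = (2 : ℝ) ^ n / 2 - (2 : ℝ) ^ k := by rw [hab]; ring
      _ ≤ ((2 : ℝ) ^ n - (2 : ℝ) ^ k) * L := hkey
      _ = (2 : ℝ) ^ k * ((b - 1) * L) := by rw [hab]; ring
    have := le_of_mul_le_mul_left hkey' ha0
    linarith
  refine ⟨part1, fun hunif => ?_⟩
  -- equality in the uniform case
  set c : ℝ := ((2 : ℝ) ^ (n - k - 1) - 1) / ((2 : ℝ) ^ (n - k) - 1) with hcdef
  have hc0 : 0 ≤ c := by
    apply div_nonneg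
    · have : (1 : ℝ) ≤ (2 : ℝ) ^ (n - k - 1) := one_le_pow₀ (by norm_num)
      linarith
    · rw [← hbdef]; linarith
  set β : ℂ := (2 : ℂ) ^ (n - k) with hβdef
  have hβcast : β = ((b : ℝ) : ℂ) := by rw [hβdef, hbdef]; push_cast; ring
  have hβ1 : β - 1 ≠ 0 := by
    rw [hβcast]
    intro hcon
    have : (b : ℂ) = 1 := by linear_combination hcon
    have : b = 1 := by exact_mod_cast this
    linarith
  have hEsum : ∑ P ∈ S.erase 1, P = β • Pi - 1 := by
    have h := Finset.add_sum_erase S id hone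
    simp only [id] at h
    rw [← hSigma, ← h]
    abel
  have hcarderase : ((S.erase 1).card : ℂ) = β - 1 := by
    rw [Finset.card_erase_of_mem hone, hcard]
    have h1 : (1 : ℕ) ≤ 2 ^ (n - k) := Nat.one_le_two_pow
    rw [Nat.cast_sub h1]
    push_cast [hβdef]
    ring
  have hΩunif : Ω = ((β - 1)⁻¹ / 2) • (β • Pi + (β - 2) • 1) := by
    rw [hΩ]
    have hterm : ∀ P ∈ S.erase 1, (μ P : ℂ) • ((2 : ℂ)⁻¹ • (P + 1))
        = ((β - 1)⁻¹ / 2) • (P + 1) := by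
      intro P hP
      rw [hunif P hP, smul_smul]
      congr 1
      rw [hβcast]
      push_cast
      rw [div_eq_mul_inv]
      ring
    rw [Finset.sum_congr rfl hterm, ← Finset.smul_sum]
    congr 1
    rw [Finset.sum_add_distrib, Finset.sum_const, hEsum, ← Nat.cast_smul_eq_nsmul ℂ, hcarderase]
    match_scalars <;> ring
  have hMeq : (1 - Pi) * Ω * (1 - Pi) = (c : ℂ) • (1 - Pi) := by
    rw [hM, hΩunif]
    have hb1r : b - 1 ≠ 0 := by linarith
    have hreal : c = (b - 2) * ((b - 1)⁻¹ / 2) := by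
      rw [hcdef, hbhalf, ← hbdef]
      field_simp
    have hccast : (c : ℂ) = (β - 2) * ((β - 1)⁻¹ / 2) := by
      rw [hreal, hβcast]
      push_cast
      ring
    rw [hccast]
    match_scalars <;> (field_simp; try ring)
  have hMM : ((1 - Pi) * Ω * (1 - Pi)) * ((1 - Pi) * Ω * (1 - Pi))
      = (c : ℂ) • ((1 - Pi) * Ω * (1 - Pi)) := by
    rw [hMeq, Matrix.smul_mul, Matrix.mul_smul, hEidem, smul_smul]
  have hle : ∀ i, lam i ≤ c := by
    intro i
    rcases eig_quad hherm' c hMM i with h | h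
    · rw [hlamdef, h]; exact hc0
    · rw [hlamdef, h]
  exact le_antisymm (ciSup_le hle) part1
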